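/- If CM(d₁₂,d₁₃,d₁₄,d₂₃,d₂₄,d₃₄) = 0 and both H(d₁₂,d₁₃,d₂₃) and H(d₁₂,d₂₄,d₁₄) are nonzero, then H(d₁₂,d₁₃,d₂₃)·H(d₁₂,d₂₄,d₁₄) is a square in the field; hence H(d₁₂,d₁₃,d₂₃) and H(d₁₂,d₂₄,d₁₄) lie in the same square class of k^×/k^{×2}. -/

import Mathlib

/-!
Neiss' identity `H(d₁₂,d₁₃,d₂₃) · H(d₁₂,d₂₄,d₁₄) = D₁₂² + 2 d₁₂² · det M`, with `M` the
bordered Cayley–Menger matrix, is a polynomial identity over any commutative ring. When the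
Cayley–Menger determinant vanishes, the product of the two Heron values is therefore `D₁₂²`.
-/

section NeissIdentity

variable {R : Type*} [CommRing R]

def heron (a b c : R) : R :=
  2*a^2*b^2 + 2*b^2*c^2 + 2*c^2*a^2 - a^4 - b^4 - c^4

def cayleyMengerMatrix (d12 d13 d14 d23 d24 d34 : R) : Matrix (Fin 5) (Fin 5) R :=
  !![0, 1, 1, 1, 1;
     1, 0, d12^2, d13^2, d14^2;
     1, d12^2, 0, d23^2, d24^2;
     1, d13^2, d23^2, 0, d34^2;
     1, d14^2, d24^2, d34^2, 0]

def neissD12 (d12 d13 d14 d23 d24 d34 : R) : R :=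
  d12^2 * (d13^2 + d23^2 + d14^2 + d24^2 - d12^2 - 2*d34^2) + (d13^2 - d23^2) * (d24^2 - d14^2)

theorem heron_mul_heron_eq_neissD12_sq_add_det (d12 d13 d14 d23 d24 d34 : R) :
    heron d12 d13 d23 * heron d12 d24 d14 =
      neissD12 d12 d13 d14 d23 d24 d34 ^ 2
        + 2 * d12^2 * (cayleyMengerMatrix d12 d13 d14 d23 d24 d34).det := by
  rw [cayleyMengerMatrix, Matrix.det_succ_row_zero]
  simp only [Fin.sum_univ_five, Matrix.det_succ_row_zero (n := 3), Fin.sum_univ_four,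
    Matrix.det_fin_three]
  simp only [heron, neissD12, Nat.succ_eq_add_one, Nat.reduceAdd, Fin.isValue,
    Fin.coe_ofNat_eq_mod, Nat.zero_mod, pow_zero, Matrix.of_apply, Matrix.cons_val',
    Matrix.cons_val_zero, Matrix.cons_val_fin_one, mul_zero, Fin.succAbove_zero,
    Matrix.submatrix_apply, Fin.succ_zero_eq_one, Matrix.cons_val_one, Fin.succ_one_eq_two,
    Matrix.cons_val, Fin.reduceSucc, zero_mul, sub_self, zero_add, sub_zero, Nat.one_mod,
    pow_one, neg_mul, one_mul, Fin.succAbove, Fin.castSucc_zero, zero_lt_one, ↓reduceIte,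
    Fin.castSucc_one, lt_self_iff_false, Fin.reduceCastSucc, Fin.lt_def, Nat.reduceMod,
    Nat.not_ofNat_lt_one, zero_sub, even_two, Even.neg_pow, one_pow, Order.lt_two_iff, zero_le,
    Std.le_refl, add_zero, Nat.mod_succ, Nat.ofNat_pos, Nat.one_lt_ofNat, Nat.lt_add_one,
    mul_one, neg_add_rev, neg_neg, Nat.not_ofNat_le_one, Nat.reduceLT]
  ring

end NeissIdentity

theorem same_square_class_general {k : Type*} [Field k] [CharZero k]
    (H : k → k → k → k)
    (hH : ∀ a b c, H a b c = 2*a^2*b^2 + 2*b^2*c^2 + 2*c^2*a^2 - a^4 - b^4 - c^4)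
    (CM : k → k → k → k → k → k → k)
    (hCM : ∀ x12 x13 x14 x23 x24 x34, CM x12 x13 x14 x23 x24 x34 =
      Matrix.det !![(0 : k), 1, 1, 1, 1;
                    1, 0, x12^2, x13^2, x14^2;
                    1, x12^2, 0, x23^2, x24^2;
                    1, x13^2, x23^2, 0, x34^2;
                    1, x14^2, x24^2, x34^2, 0] / 2)
    (d12 d13 d14 d23 d24 d34 : k)
    (hzero : CM d12 d13 d14 d23 d24 d34 = 0) :
    ∃ z : k, H d12 d13 d23 * H d12 d24 d14 = z^2 := by
  have hdet : (cayleyMengerMatrix d12 d13 d14 d23 d24 d34).det = 0 := by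
    rw [hCM, div_eq_zero_iff] at hzero
    exact hzero.resolve_right two_ne_zero
  refine ⟨neissD12 d12 d13 d14 d23 d24 d34, ?_⟩
  have hneiss := heron_mul_heron_eq_neissD12_sq_add_det d12 d13 d14 d23 d24 d34
  rw [hdet, mul_zero, add_zero] at hneiss
  rw [hH, hH]
  exact hneiss

/-- If the Cayley–Menger function vanishes (the planar-quadrilateral case) and
the two Heron values are nonzero, then their product is a square, i.e. the two
Heron values lie in the same square class of `k^×/k^{×2}`. -/
theorem same_square_class {k : Type*} [Field k] [CharZero k]
    (H : k → k → k → k)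
    (hH : ∀ a b c, H a b c = 2*a^2*b^2 + 2*b^2*c^2 + 2*c^2*a^2 - a^4 - b^4 - c^4)
    (CM : k → k → k → k → k → k → k)
    (hCM : ∀ x12 x13 x14 x23 x24 x34, CM x12 x13 x14 x23 x24 x34 =
      Matrix.det !![(0 : k), 1, 1, 1, 1;
                    1, 0, x12^2, x13^2, x14^2;
                    1, x12^2, 0, x23^2, x24^2;
                    1, x13^2, x23^2, 0, x34^2;
                    1, x14^2, x24^2, x34^2, 0] / 2)
    (d12 d13 d14 d23 d24 d34 : k)
    (hzero : CM d12 d13 d14 d23 d24 d34 = 0)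
    (h1 : H d12 d13 d23 ≠ 0) (h2 : H d12 d24 d14 ≠ 0) :
    ∃ z : k, H d12 d13 d23 * H d12 d24 d14 = z^2 :=
  same_square_class_general H hH CM hCM d12 d13 d14 d23 d24 d34 hzero
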